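/- Let X be a δ-hyperbolic graph, let a, x be vertices, and let α = 2δ. Then every vertex v lying on some geodesic between a and x belongs to the set U_{2δ}[a,x] of points on 2δ-conical-geodesics between x and a; in particular, for each 0 ≤ ρ ≤ d(a,x), the slice of U_{2δ}[a,x] at distance ρ from a is non-empty. -/

import Mathlib

/-- A graph: vertices, oriented edges, origin/terminus maps, and a
fixed-point-free edge-reversing involution. -/
structure MGraph where
  V : Type
  E : Type
  o : E → V
  t : E → V
  rev : E → E
  rev_o : ∀ e, o (rev e) = t e
  rev_t : ∀ e, t (rev e) = o e
  rev_rev : ∀ e, rev (rev e) = e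
  rev_ne : ∀ e, rev e ≠ e

namespace MGraph

variable (X : MGraph)

/-- A walk from `x` to `y` given by a list of consecutive edges. -/
def IsWalk : List X.E → X.V → X.V → Prop
  | [], x, y => x = y
  | e :: es, x, y => X.o e = x ∧ IsWalk es (X.t e) y

/-- The vertices visited by a walk starting at `x`. -/
def walkVerts : X.V → List X.E → List X.V
  | x, [] => [x]
  | x, e :: es => x :: walkVerts (X.t e) es

/-- The graph metric (length of each edge is 1), valued in `ℕ∞`. -/
noncomputable def dist (x y : X.V) : ℕ∞ :=
  sInf {n : ℕ∞ | ∃ es, X.IsWalk es x y ∧ (es.length : ℕ∞) = n}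

/-- The distance from `x` to `y` in the graph with the vertex `v` removed. -/
noncomputable def delDist (v x y : X.V) : ℕ∞ :=
  sInf {n : ℕ∞ | ∃ es, X.IsWalk es x y ∧ v ∉ X.walkVerts x es ∧ (es.length : ℕ∞) = n}

/-- The angle at `v = t e1 = o e2` between two edges `e1, e2`: the distance
from `o e1` to `t e2` in the graph with the vertex `t e1` removed. -/
noncomputable def angle (e1 e2 : X.E) : ℕ∞ :=
  X.delDist (X.t e1) (X.o e1) (X.t e2)

/-- A geodesic is a walk whose length realizes the distance. -/
def IsGeodesic (es : List X.E) (x y : X.V) : Prop :=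
  X.IsWalk es x y ∧ (es.length : ℕ∞) = X.dist x y

/-- `∠_c(x1,x2) > θ` : there are edges `e1, e2` with `t e1 = o e2 = c`, each
lying on a geodesic between `c` and `x_i`, making an angle `> θ` at `c`. -/
def AngleGT (c x1 x2 : X.V) (θ : ℕ∞) : Prop :=
  ∃ (e1 e2 : X.E) (es1 es2 : List X.E), X.t e1 = c ∧ X.o e2 = c ∧
    X.IsGeodesic (X.rev e1 :: es1) c x1 ∧ X.IsGeodesic (e2 :: es2) c x2 ∧
    θ < X.angle e1 e2

/-- All pairs of consecutive edges of a walk make an angle at most `θ`. -/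
def AngleBounded (θ : ℕ∞) : List X.E → Prop
  | [] => True
  | [_] => True
  | e :: e' :: es => X.angle e e' ≤ θ ∧ AngleBounded θ (e' :: es)

/-- `v` is a vertex of the cone of parameter `θ` around the oriented edge `e`:
it lies on a path starting at `o e` by the edge `e`, of length at most `θ`,
whose consecutive edges make angles at most `θ`. -/
def InConeV (θ : ℕ∞) (e : X.E) (v : X.V) : Prop :=
  ∃ (es : List X.E) (y : X.V), X.IsWalk (e :: es) (X.o e) y ∧
    ((e :: es).length : ℕ∞) ≤ θ ∧ X.AngleBounded θ (e :: es) ∧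
    v ∈ X.walkVerts (X.o e) (e :: es)

/-- `ε` is an edge of the cone of parameter `θ` around the oriented edge `e`. -/
def InConeE (θ : ℕ∞) (e ε : X.E) : Prop :=
  ∃ (es : List X.E) (y : X.V), X.IsWalk (e :: es) (X.o e) y ∧
    ((e :: es).length : ℕ∞) ≤ θ ∧ X.AngleBounded θ (e :: es) ∧
    (ε ∈ e :: es ∨ X.rev ε ∈ e :: es)

/-- A graph is fine if for each edge `e` and each `L`, only finitely many
edges arrive at `o e` making an angle at most `L` with `e`. -/
def Fine : Prop :=
  ∀ (e : X.E) (L : ℕ), {e' : X.E | X.t e' = X.o e ∧ X.angle e' e ≤ (L : ℕ∞)}.Finite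

/-- δ-hyperbolicity: geodesic triangles are δ-thin. -/
def Hyperbolic (δ : ℕ) : Prop :=
  ∀ (a b c : X.V) (p q r : List X.E),
    X.IsGeodesic p a b → X.IsGeodesic q b c → X.IsGeodesic r a c →
    ∀ v ∈ X.walkVerts a p, ∃ w, (w ∈ X.walkVerts b q ∨ w ∈ X.walkVerts a r) ∧
      X.dist v w ≤ (δ : ℕ∞)

/-- The four point inequality form of δ-hyperbolicity. -/
def FourPoint (δ : ℕ) : Prop :=
  ∀ a x y y' : X.V,
    X.dist a x + X.dist y y' ≤
      max (X.dist a y + X.dist y' x) (X.dist a y' + X.dist y x) + (δ : ℕ∞)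

/-- Connectedness. -/
def Connected : Prop := ∀ x y : X.V, ∃ es, X.IsWalk es x y

/-- `t` is on an `α`-geodesic between `x` and `a`. -/
def OnAlphaGeod (α : ℕ∞) (t x a : X.V) : Prop :=
  X.dist x t + X.dist t a ≤ X.dist x a + α

/-- The set `𝓔_{a,x}(ρ)` of edges at distance `ρ` from `a` lying on
geodesics between `a` and `x`. -/
def GeodEdgeAt (a x : X.V) (ρ : ℕ∞) (e : X.E) : Prop :=
  X.dist a (X.o e) = ρ ∧ ∃ es, (X.IsGeodesic es a x ∨ X.IsGeodesic es x a) ∧ e ∈ es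

/-- The set `U_α[a,x]` of points on `α`-conical-geodesics between `x` and `a`. -/
def ConicalSet (α : ℕ) (a x : X.V) : Set X.V :=
  {t | X.OnAlphaGeod (α : ℕ∞) t x a ∧ X.dist a t ≤ X.dist a x ∧
       ∀ e, X.GeodEdgeAt a x (X.dist a t) e → X.InConeV ((40 * α : ℕ) : ℕ∞) e t}

end MGraph

/-!
Let `v = h ρ` lie on a geodesic `h` from `a` to `x`, and let `e` be an edge of another geodesic `g`
from `a` to `x` with `o e = g ρ` and `t e = g (ρ ± 1)`. Thin triangles make `g` and `h`
`2δ`-fellow travellers, so a geodesic `σ` from `g ρ` to `h ρ` has length at most `2δ`, and the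
cone walk is `e`, its reverse, then `σ`. Its angles are bounded because a vertex `c` other than
`g ρ` and `h ρ` can be bypassed: descending `g` to level `ρ - 2δ - 1`, crossing over to `h` and
climbing back joins `g ρ` to `h ρ` in at most `6δ + 2` steps strictly below level `ρ`, the
symmetric walk stays strictly above it, and one of the two misses `c`. The angle at `g ρ` itself
is bounded in the same way, starting from `g (ρ ± 1)`.
-/

namespace MGraph

variable {X : MGraph}

def revWalk (es : List X.E) : List X.E := (es.map X.rev).reverse

def vertexAt (x : X.V) (es : List X.E) (i : ℕ) : X.V := (X.walkVerts x es).getD i x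

section Walk

variable {es : List X.E} {x y : X.V}

@[simp] lemma walkVerts_nil (x : X.V) : X.walkVerts x [] = [x] := rfl

@[simp] lemma walkVerts_cons (x : X.V) (e : X.E) (es : List X.E) :
    X.walkVerts x (e :: es) = x :: X.walkVerts (X.t e) es := rfl

@[simp] lemma length_walkVerts (x : X.V) (es : List X.E) :
    (X.walkVerts x es).length = es.length + 1 := by
  induction es generalizing x with
  | nil => rfl
  | cons e es ih => simp [ih]

@[simp] lemma vertexAt_zero (x : X.V) (es : List X.E) : vertexAt x es 0 = x := by
  cases es <;> rfl

lemma vertexAt_cons (x : X.V) (e : X.E) (es : List X.E) {i : ℕ} (hi : i ≤ es.length) :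
    vertexAt x (e :: es) (i + 1) = vertexAt (X.t e) es i := by
  have hi' : i < (X.walkVerts (X.t e) es).length := by simp; omega
  simp only [vertexAt, walkVerts_cons, List.getD_cons_succ, List.getD_eq_getElem _ _ hi']

lemma start_mem_walkVerts (x : X.V) (es : List X.E) : x ∈ X.walkVerts x es := by
  cases es <;> simp

lemma mem_walkVerts_iff {w : X.V} :
    w ∈ X.walkVerts x es ↔ ∃ i ≤ es.length, w = vertexAt x es i := by
  induction es generalizing x with
  | nil => simp [vertexAt]
  | cons e es ih =>
    simp only [walkVerts_cons, List.mem_cons, ih]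
    constructor
    · rintro (rfl | ⟨i, hi, rfl⟩)
      · exact ⟨0, by simp, by simp⟩
      · exact ⟨i + 1, by simpa using hi, (vertexAt_cons _ _ _ hi).symm⟩
    · rintro ⟨_ | i, hi, rfl⟩
      · simp
      · exact .inr ⟨i, by simpa using hi, vertexAt_cons _ _ _ (by simpa using hi)⟩

lemma vertexAt_mem_walkVerts {i : ℕ} (hi : i ≤ es.length) : vertexAt x es i ∈ X.walkVerts x es :=
  mem_walkVerts_iff.2 ⟨i, hi, rfl⟩

lemma vertexAt_take (x : X.V) (es : List X.E) {i k : ℕ} (hik : i ≤ k) :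
    vertexAt x (es.take k) i = vertexAt x es i := by
  induction es generalizing x i k with
  | nil => simp
  | cons e es ih =>
    obtain _ | i := i
    · simp
    obtain _ | k := k
    · omega
    by_cases hi : i ≤ es.length
    · rw [List.take_succ_cons, vertexAt_cons _ _ _ hi,
        vertexAt_cons _ _ _ (by simp; omega), ih _ (by omega)]
    · simp only [vertexAt, List.take_succ_cons, walkVerts_cons, List.getD_cons_succ]
      rw [List.getD_eq_default _ _ (by simp; omega), List.getD_eq_default _ _ (by simp; omega)]

lemma vertexAt_drop (x : X.V) (es : List X.E) {n j : ℕ} (h : n + j ≤ es.length) :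
    vertexAt (vertexAt x es n) (es.drop n) j = vertexAt x es (n + j) := by
  induction es generalizing x n with
  | nil =>
    obtain ⟨rfl, rfl⟩ : n = 0 ∧ j = 0 := by simpa using h
    rfl
  | cons e es ih =>
    obtain _ | n := n
    · simp
    simp only [List.length_cons] at h
    rw [vertexAt_cons _ _ _ (by omega), List.drop_succ_cons, Nat.add_right_comm,
      vertexAt_cons _ _ _ (by omega)]
    exact ih _ (by omega)

@[simp] lemma length_revWalk (es : List X.E) : (revWalk es).length = es.length := by
  simp [revWalk]

namespace IsWalk

lemma append {fs : List X.E} {z : X.V} (h₁ : X.IsWalk es x y) (h₂ : X.IsWalk fs y z) :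
    X.IsWalk (es ++ fs) x z := by
  induction es generalizing x with
  | nil => cases h₁; exact h₂
  | cons e es ih => exact ⟨h₁.1, ih h₁.2⟩

lemma mem_walkVerts_append {fs : List X.E} (h : X.IsWalk es x y) {w : X.V} :
    w ∈ X.walkVerts x (es ++ fs) ↔ w ∈ X.walkVerts x es ∨ w ∈ X.walkVerts y fs := by
  induction es generalizing x with
  | nil =>
    cases h
    simp only [List.nil_append, walkVerts_nil, List.mem_singleton]
    exact ⟨.inr, by rintro (rfl | h); exacts [start_mem_walkVerts _ _, h]⟩
  | cons e es ih => simp only [List.cons_append, walkVerts_cons, List.mem_cons, ih h.2, or_assoc]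

lemma vertexAt_length (h : X.IsWalk es x y) : vertexAt x es es.length = y := by
  induction es generalizing x with
  | nil => cases h; rfl
  | cons e es ih => rw [List.length_cons, vertexAt_cons _ _ _ le_rfl]; exact ih h.2

lemma end_mem_walkVerts (h : X.IsWalk es x y) : y ∈ X.walkVerts x es :=
  h.vertexAt_length ▸ vertexAt_mem_walkVerts le_rfl

lemma o_getElem (h : X.IsWalk es x y) {i : ℕ} (hi : i < es.length) :
    X.o es[i] = vertexAt x es i := by
  induction es generalizing x i with
  | nil => simp at hi
  | cons e es ih =>
    obtain _ | i := i
    · simpa using h.1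
    rw [vertexAt_cons _ _ _ (by simp at hi; omega)]
    simpa using ih h.2 (by simpa using hi)

lemma t_getElem (h : X.IsWalk es x y) {i : ℕ} (hi : i < es.length) :
    X.t es[i] = vertexAt x es (i + 1) := by
  induction es generalizing x i with
  | nil => simp at hi
  | cons e es ih =>
    rw [vertexAt_cons _ _ _ (by simp at hi; omega)]
    obtain _ | i := i
    · simp
    simpa using ih h.2 (by simpa using hi)

lemma exists_vertexAt_of_mem {e : X.E} (h : X.IsWalk es x y) (he : e ∈ es) :
    ∃ k < es.length, X.o e = vertexAt x es k ∧ X.t e = vertexAt x es (k + 1) := by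
  obtain ⟨k, hk, rfl⟩ := List.getElem_of_mem he
  exact ⟨k, hk, h.o_getElem hk, h.t_getElem hk⟩

lemma take (h : X.IsWalk es x y) {k : ℕ} (hk : k ≤ es.length) :
    X.IsWalk (es.take k) x (vertexAt x es k) := by
  induction es generalizing x k with
  | nil =>
    obtain rfl : k = 0 := by simpa using hk
    rfl
  | cons e es ih =>
    obtain _ | k := k
    · rfl
    rw [vertexAt_cons _ _ _ (by simpa using hk)]
    exact ⟨h.1, ih h.2 (by simpa using hk)⟩

lemma drop (h : X.IsWalk es x y) {n : ℕ} (hn : n ≤ es.length) :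
    X.IsWalk (es.drop n) (vertexAt x es n) y := by
  induction es generalizing x n with
  | nil =>
    obtain rfl : n = 0 := by simpa using hn
    exact h
  | cons e es ih =>
    obtain _ | n := n
    · exact h
    rw [vertexAt_cons _ _ _ (by simpa using hn)]
    exact ih h.2 (by simpa using hn)

lemma rev (h : X.IsWalk es x y) : X.IsWalk (revWalk es) y x := by
  induction es generalizing x with
  | nil => cases h; rfl
  | cons e es ih =>
    rw [revWalk, List.map_cons, List.reverse_cons]
    refine (ih h.2).append ⟨X.rev_o e, ?_⟩
    rw [X.rev_t e, h.1]
    rfl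

lemma mem_walkVerts_revWalk (h : X.IsWalk es x y) {w : X.V} :
    w ∈ X.walkVerts y (revWalk es) ↔ w ∈ X.walkVerts x es := by
  induction es generalizing x with
  | nil => cases h; simp [revWalk]
  | cons e es ih =>
    rw [revWalk, List.map_cons, List.reverse_cons, ← revWalk,
      h.2.rev.mem_walkVerts_append, ih h.2]
    simp only [walkVerts_cons, walkVerts_nil, List.mem_cons, X.rev_t, h.1,
      List.not_mem_nil, or_false]
    constructor
    · rintro (hw | rfl | rfl)
      exacts [.inr hw, .inr (start_mem_walkVerts _ _), .inl rfl]
    · rintro (rfl | hw)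
      exacts [.inr (.inr rfl), .inl hw]

lemma exists_subwalk_of_le (h : X.IsWalk es x y) {i k : ℕ} (hik : i ≤ k) (hk : k ≤ es.length) :
    ∃ p, X.IsWalk p (vertexAt x es i) (vertexAt x es k) ∧ p.length = k - i ∧
      ∀ w ∈ X.walkVerts (vertexAt x es i) p, ∃ m, i ≤ m ∧ m ≤ k ∧ w = vertexAt x es m := by
  have htake := h.take hk
  refine ⟨(es.take k).drop i, ?_, by simp; omega, fun w hw => ?_⟩
  · simpa [vertexAt_take x es hik] using htake.drop (n := i) (by simp; omega)
  obtain ⟨j, hj, rfl⟩ := mem_walkVerts_iff.1 hw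
  simp only [List.length_drop, List.length_take] at hj
  refine ⟨i + j, by omega, by omega, ?_⟩
  rw [List.drop_take, vertexAt_take _ _ (by omega), vertexAt_drop _ _ (by omega)]

lemma exists_subwalk (h : X.IsWalk es x y) {i k : ℕ} (hi : i ≤ es.length) (hk : k ≤ es.length) :
    ∃ p, X.IsWalk p (vertexAt x es i) (vertexAt x es k) ∧ p.length = max i k - min i k ∧
      ∀ w ∈ X.walkVerts (vertexAt x es i) p,
        ∃ m, min i k ≤ m ∧ m ≤ max i k ∧ w = vertexAt x es m := by
  rcases le_total i k with hik | hki
  · obtain ⟨p, hp, hlen, hverts⟩ := h.exists_subwalk_of_le hik hk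
    exact ⟨p, hp, by omega, by simpa [hik] using hverts⟩
  · obtain ⟨p, hp, hlen, hverts⟩ := h.exists_subwalk_of_le hki hi
    refine ⟨revWalk p, hp.rev, by simp; omega, fun w hw => ?_⟩
    simpa [hki] using hverts w (hp.mem_walkVerts_revWalk.1 hw)

end IsWalk

lemma dist_le_length (h : X.IsWalk es x y) : X.dist x y ≤ es.length := sInf_le ⟨es, h, rfl⟩

lemma delDist_le_length {v : X.V} (h : X.IsWalk es x y) (hv : v ∉ X.walkVerts x es) :
    X.delDist v x y ≤ es.length :=
  sInf_le ⟨es, h, hv, rfl⟩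

lemma exists_isGeodesic (h : X.dist x y ≠ ⊤) : ∃ es, X.IsGeodesic es x y := by
  have hS : ∃ m : ℕ, ∃ es, X.IsWalk es x y ∧ es.length = m := by
    by_contra! hS
    refine h (sInf_eq_top.2 ?_)
    rintro _ ⟨es, hw, rfl⟩
    exact absurd rfl (hS _ es hw)
  classical
  obtain ⟨es, hw, hlen⟩ := Nat.find_spec hS
  refine ⟨es, hw, le_antisymm ?_ (dist_le_length hw)⟩
  refine le_sInf ?_
  rintro _ ⟨fs, hfs, rfl⟩
  exact Nat.cast_le.2 (hlen ▸ Nat.find_min' hS ⟨fs, hfs, rfl⟩)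

lemma exists_isGeodesic_of_dist_le {n : ℕ} (h : X.dist x y ≤ n) :
    ∃ es, X.IsGeodesic es x y ∧ es.length ≤ n := by
  obtain ⟨es, hes⟩ := exists_isGeodesic (ne_top_of_le_ne_top (ENat.natCast_ne_top n) h)
  exact ⟨es, hes, by exact_mod_cast hes.2 ▸ h⟩

@[simp] lemma dist_self (x : X.V) : X.dist x x = 0 :=
  nonpos_iff_eq_zero.1 (by simpa using dist_le_length (es := []) (x := x) rfl)

lemma dist_comm (x y : X.V) : X.dist x y = X.dist y x := by
  suffices key : ∀ u v : X.V, X.dist u v ≤ X.dist v u from le_antisymm (key x y) (key y x)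
  intro u v
  by_cases h : X.dist v u = ⊤
  · simp [h]
  obtain ⟨es, hw, hlen⟩ := exists_isGeodesic h
  simpa [hlen] using dist_le_length hw.rev

lemma dist_triangle (x y z : X.V) : X.dist x z ≤ X.dist x y + X.dist y z := by
  by_cases h₁ : X.dist x y = ⊤
  · simp [h₁]
  by_cases h₂ : X.dist y z = ⊤
  · simp [h₂]
  obtain ⟨es, hw₁, hl₁⟩ := exists_isGeodesic h₁
  obtain ⟨fs, hw₂, hl₂⟩ := exists_isGeodesic h₂
  simpa [← hl₁, ← hl₂] using dist_le_length (hw₁.append hw₂)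

lemma IsWalk.dist_vertexAt_le (h : X.IsWalk es x y) {i k : ℕ} (hi : i ≤ es.length)
    (hk : k ≤ es.length) :
    X.dist (vertexAt x es i) (vertexAt x es k) ≤ (max i k - min i k : ℕ) := by
  obtain ⟨p, hp, hlen, -⟩ := h.exists_subwalk hi hk
  exact hlen ▸ dist_le_length hp

lemma IsWalk.dist_le_of_mem (h : X.IsWalk es x y) {w : X.V} (hw : w ∈ X.walkVerts x es) :
    X.dist x w ≤ es.length := by
  obtain ⟨i, hi, rfl⟩ := mem_walkVerts_iff.1 hw
  simpa using (h.dist_vertexAt_le (Nat.zero_le _) hi).trans (Nat.cast_le.2 (by omega))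

namespace IsGeodesic

lemma rev (h : X.IsGeodesic es x y) : X.IsGeodesic (revWalk es) y x :=
  ⟨h.1.rev, by rw [length_revWalk, h.2, dist_comm]⟩

lemma length_eq {fs : List X.E} (h₁ : X.IsGeodesic es x y) (h₂ : X.IsGeodesic fs x y) :
    es.length = fs.length := by
  exact_mod_cast h₁.2.trans h₂.2.symm

lemma dist_vertexAt (h : X.IsGeodesic es x y) {i : ℕ} (hi : i ≤ es.length) :
    X.dist x (vertexAt x es i) = i ∧ X.dist (vertexAt x es i) y = (es.length - i : ℕ) := by
  have h₁ := h.1.dist_vertexAt_le (Nat.zero_le _) hi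
  have h₂ := h.1.dist_vertexAt_le hi le_rfl
  rw [vertexAt_zero] at h₁
  rw [h.1.vertexAt_length] at h₂
  have htri := h.2 ▸ dist_triangle x (vertexAt x es i) y
  lift X.dist x (vertexAt x es i) to ℕ using ne_top_of_le_ne_top (ENat.natCast_ne_top _) h₁ with d₁
  lift X.dist (vertexAt x es i) y to ℕ using ne_top_of_le_ne_top (ENat.natCast_ne_top _) h₂ with d₂
  norm_cast at h₁ h₂ htri ⊢
  omega

lemma dist_start_vertexAt (h : X.IsGeodesic es x y) {i : ℕ} (hi : i ≤ es.length) :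
    X.dist x (vertexAt x es i) = i :=
  (h.dist_vertexAt hi).1

lemma dist_vertexAt_end (h : X.IsGeodesic es x y) {i : ℕ} (hi : i ≤ es.length) :
    X.dist (vertexAt x es i) y = (es.length - i : ℕ) :=
  (h.dist_vertexAt hi).2

lemma eq_of_vertexAt_eq (h : X.IsGeodesic es x y) {i k : ℕ} (hi : i ≤ es.length)
    (hk : k ≤ es.length) (hik : vertexAt x es i = vertexAt x es k) : i = k := by
  have := (h.dist_start_vertexAt hi).symm.trans (hik ▸ h.dist_start_vertexAt hk)
  exact_mod_cast this

end IsGeodesic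

end Walk

lemma angleBounded_of_forall_getElem {θ : ℕ∞} :
    ∀ l : List X.E, (∀ i (hi : i + 1 < l.length), X.angle l[i] l[i + 1] ≤ θ) →
      X.AngleBounded θ l
  | [], _ => trivial
  | [_], _ => trivial
  | e :: f :: l, h =>
    ⟨h 0 (by simp), angleBounded_of_forall_getElem (f :: l) fun i hi => by
      have := h (i + 1) (by simpa using hi)
      simpa using this⟩

lemma AngleBounded.mono {θ θ' : ℕ∞} (hθ : θ ≤ θ') :
    ∀ {l : List X.E}, X.AngleBounded θ l → X.AngleBounded θ' l
  | [], _ => trivial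
  | [_], _ => trivial
  | _ :: _ :: _, ⟨h₁, h₂⟩ => ⟨h₁.trans hθ, h₂.mono hθ⟩

lemma InConeV.mono {θ θ' : ℕ∞} {e : X.E} {v : X.V} (hθ : θ ≤ θ') (h : X.InConeV θ e v) :
    X.InConeV θ' e v :=
  let ⟨es, y, hw, hlen, hang, hv⟩ := h
  ⟨es, y, hw, hlen.trans hθ, hang.mono hθ, hv⟩

section Geodesics

variable {δ : ℕ} {g h : List X.E} {a x : X.V}

lemma IsGeodesic.vertexAt_eq_vertexAt (hg : X.IsGeodesic g a x) (hh : X.IsGeodesic h a x)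
    {ρ : ℕ} (hρ : ρ = 0 ∨ ρ = g.length) : vertexAt a g ρ = vertexAt a h ρ := by
  rcases hρ with rfl | rfl
  · simp
  · rw [hg.1.vertexAt_length, hg.length_eq hh, hh.1.vertexAt_length]

lemma IsGeodesic.one_le_of_vertexAt_ne (hg : X.IsGeodesic g a x) (hh : X.IsGeodesic h a x)
    {ρ : ℕ} (hρ : ρ ≤ g.length) (hne : vertexAt a g ρ ≠ vertexAt a h ρ) :
    1 ≤ ρ ∧ ρ < g.length := by
  by_contra! hρ'
  exact hne (hg.vertexAt_eq_vertexAt hh (by omega))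

lemma exists_vertexAt_of_mem_isGeodesic {e : X.E} {es : List X.E}
    (hes : X.IsGeodesic es a x ∨ X.IsGeodesic es x a) (he : e ∈ es) :
    ∃ g k, X.IsGeodesic g a x ∧ k < g.length ∧
      (X.o e = vertexAt a g k ∧ X.t e = vertexAt a g (k + 1) ∨
        X.o e = vertexAt a g (k + 1) ∧ X.t e = vertexAt a g k) := by
  rcases hes with hes | hes
  · obtain ⟨k, hk, ho, ht⟩ := hes.1.exists_vertexAt_of_mem he
    exact ⟨es, k, hes, hk, .inl ⟨ho, ht⟩⟩
  · obtain ⟨k, hk, ho, ht⟩ :=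
      hes.rev.1.exists_vertexAt_of_mem (List.mem_reverse.2 (List.mem_map_of_mem (f := X.rev) he))
    rw [X.rev_o] at ho
    rw [X.rev_t] at ht
    exact ⟨_, k, hes.rev, hk, .inr ⟨ht, ho⟩⟩

lemma Hyperbolic.dist_vertexAt_le (hδ : X.Hyperbolic δ) (hg : X.IsGeodesic g a x)
    (hh : X.IsGeodesic h a x) {j : ℕ} (hj : j ≤ g.length) :
    X.dist (vertexAt a g j) (vertexAt a h j) ≤ (2 * δ : ℕ) := by
  have hlen := hg.length_eq hh
  obtain ⟨w, hw, hdw⟩ :=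
    hδ a x x g [] h hg ⟨rfl, by simp⟩ hh _ (vertexAt_mem_walkVerts hj)
  rcases hw with hw | hw
  · obtain rfl : w = x := by simpa using hw
    have h₁ := hg.dist_vertexAt_end hj
    have h₂ := hh.dist_vertexAt_end (hlen ▸ hj)
    refine (dist_triangle _ w _).trans ?_
    rw [h₁] at hdw
    rw [h₁, dist_comm, h₂, ← hlen]
    norm_cast at hdw ⊢
    omega
  · obtain ⟨i, hi, rfl⟩ := mem_walkVerts_iff.1 hw
    have t₁ := dist_triangle a (vertexAt a g j) (vertexAt a h i)
    have t₂ := dist_triangle a (vertexAt a h i) (vertexAt a g j)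
    have hhh := hh.1.dist_vertexAt_le hi (hlen ▸ hj)
    rw [hg.dist_start_vertexAt hj, hh.dist_start_vertexAt hi] at t₁ t₂
    rw [dist_comm (vertexAt a h i)] at t₂
    refine (dist_triangle _ (vertexAt a h i) _).trans ?_
    lift X.dist (vertexAt a g j) (vertexAt a h i) to ℕ using
      ne_top_of_le_ne_top (ENat.natCast_ne_top _) hdw with d
    lift X.dist (vertexAt a h i) (vertexAt a h j) to ℕ using
      ne_top_of_le_ne_top (ENat.natCast_ne_top _) hhh with d'
    norm_cast at *
    omega

lemma Hyperbolic.exists_walk_below (hδ : X.Hyperbolic δ) (hg : X.IsGeodesic g a x)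
    (hh : X.IsGeodesic h a x) {ρ i : ℕ} (hρ : 1 ≤ ρ) (hρg : ρ ≤ g.length) (hiρ : ρ ≤ i + 1)
    (hi : i ≤ ρ) {c : X.V} (hc : (ρ : ℕ∞) ≤ X.dist a c) (hcg : c ≠ vertexAt a g i)
    (hch : c ≠ vertexAt a h ρ) :
    ∃ L, X.IsWalk L (vertexAt a g i) (vertexAt a h ρ) ∧ L.length ≤ 6 * δ + 2 ∧
      c ∉ X.walkVerts (vertexAt a g i) L := by
  have hlen := hg.length_eq hh
  set k := ρ - (2 * δ + 1)
  obtain ⟨P, hP, hPlen, hPv⟩ := hg.1.exists_subwalk (i := i) (k := k) (by omega) (by omega)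
  obtain ⟨C, hC, hClen⟩ :=
    exists_isGeodesic_of_dist_le (hδ.dist_vertexAt_le hg hh (j := k) (by omega))
  obtain ⟨Q, hQ, hQlen, hQv⟩ := hh.1.exists_subwalk (i := k) (k := ρ) (by omega) (by omega)
  have hC0 : k = 0 → C.length = 0 := by
    intro hk
    have := hC.2
    rw [hk, vertexAt_zero, vertexAt_zero, dist_self] at this
    exact_mod_cast this
  refine ⟨P ++ (C ++ Q), hP.append (hC.1.append hQ), by simp; omega, fun hmem => ?_⟩
  rw [hP.mem_walkVerts_append, hC.1.mem_walkVerts_append] at hmem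
  rcases hmem with hmem | hmem | hmem
  · obtain ⟨m, hm₁, hm₂, rfl⟩ := hPv c hmem
    rw [hg.dist_start_vertexAt (by omega), Nat.cast_le] at hc
    exact hcg (by rw [show m = i by omega])
  · have := hc.trans ((dist_triangle a _ c).trans
      (add_le_add (hg.dist_start_vertexAt (by omega)).le (hC.1.dist_le_of_mem hmem)))
    norm_cast at this
    omega
  · obtain ⟨m, hm₁, hm₂, rfl⟩ := hQv c hmem
    rw [hh.dist_start_vertexAt (by omega), Nat.cast_le] at hc
    exact hch (by rw [show m = ρ by omega])

lemma Hyperbolic.exists_walk_above (hδ : X.Hyperbolic δ) (hg : X.IsGeodesic g a x)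
    (hh : X.IsGeodesic h a x) {ρ i : ℕ} (hρg : ρ < g.length) (hρi : ρ ≤ i) (hi : i ≤ ρ + 1)
    {c : X.V} (hc : X.dist a c ≤ ρ) (hcg : c ≠ vertexAt a g i) (hch : c ≠ vertexAt a h ρ) :
    ∃ L, X.IsWalk L (vertexAt a g i) (vertexAt a h ρ) ∧ L.length ≤ 6 * δ + 2 ∧
      c ∉ X.walkVerts (vertexAt a g i) L := by
  have hlen := hg.length_eq hh
  set k := min (ρ + 2 * δ + 1) g.length
  obtain ⟨P, hP, hPlen, hPv⟩ := hg.1.exists_subwalk (i := i) (k := k) (by omega) (by omega)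
  obtain ⟨C, hC, hClen⟩ :=
    exists_isGeodesic_of_dist_le (hδ.dist_vertexAt_le hg hh (j := k) (by omega))
  obtain ⟨Q, hQ, hQlen, hQv⟩ := hh.1.exists_subwalk (i := k) (k := ρ) (by omega) (by omega)
  have hCx : k = g.length → C.length = 0 := by
    intro hk
    have := hC.2
    rw [hg.vertexAt_eq_vertexAt hh (.inr hk), dist_self] at this
    exact_mod_cast this
  refine ⟨P ++ (C ++ Q), hP.append (hC.1.append hQ), by simp; omega, fun hmem => ?_⟩
  rw [hP.mem_walkVerts_append, hC.1.mem_walkVerts_append] at hmem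
  rcases hmem with hmem | hmem | hmem
  · obtain ⟨m, hm₁, hm₂, rfl⟩ := hPv c hmem
    rw [hg.dist_start_vertexAt (by omega), Nat.cast_le] at hc
    exact hcg (by rw [show m = i by omega])
  · have := (hg.dist_start_vertexAt (i := k) (by omega)).symm.le.trans
      ((dist_triangle a c _).trans (add_le_add hc ((dist_comm c _).le.trans
        (hC.1.dist_le_of_mem hmem))))
    norm_cast at this
    omega
  · obtain ⟨m, hm₁, hm₂, rfl⟩ := hQv c hmem
    rw [hh.dist_start_vertexAt (by omega), Nat.cast_le] at hc
    exact hch (by rw [show m = ρ by omega])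
lemma Hyperbolic.delDist_le (hδ : X.Hyperbolic δ) (hg : X.IsGeodesic g a x)
    (hh : X.IsGeodesic h a x) {ρ : ℕ} (hρ : ρ ≤ g.length) {c p q : X.V} {P Q : List X.E}
    (hP : X.IsWalk P p (vertexAt a g ρ)) (hPc : c ∉ X.walkVerts p P)
    (hQ : X.IsWalk Q (vertexAt a h ρ) q) (hQc : c ∉ X.walkVerts (vertexAt a h ρ) Q)
    (hcg : c ≠ vertexAt a g ρ) (hch : c ≠ vertexAt a h ρ) :
    X.delDist c p q ≤ (P.length + (6 * δ + 2) + Q.length : ℕ) := by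
  obtain ⟨L, hL, hLlen, hLc⟩ : ∃ L, X.IsWalk L (vertexAt a g ρ) (vertexAt a h ρ) ∧
      L.length ≤ 6 * δ + 2 ∧ c ∉ X.walkVerts (vertexAt a g ρ) L := by
    by_cases heq : vertexAt a g ρ = vertexAt a h ρ
    · exact ⟨[], heq, by simp, by simpa using hcg⟩
    obtain ⟨hρ₁, hρ₂⟩ := hg.one_le_of_vertexAt_ne hh hρ heq
    rcases le_total (ρ : ℕ∞) (X.dist a c) with hc | hc
    · exact hδ.exists_walk_below hg hh hρ₁ hρ (by omega) le_rfl hc hcg hch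
    · exact hδ.exists_walk_above hg hh hρ₂ le_rfl (by omega) hc hcg hch
  refine (delDist_le_length (hP.append (hL.append hQ)) ?_).trans (Nat.cast_le.2 (by simp; omega))
  rw [hP.mem_walkVerts_append, hL.mem_walkVerts_append]
  tauto

lemma Hyperbolic.angleBounded_of_isGeodesic (hδ : X.Hyperbolic δ) (hg : X.IsGeodesic g a x)
    (hh : X.IsGeodesic h a x) {ρ : ℕ} (hρ : ρ ≤ g.length) {σ : List X.E}
    (hσ : X.IsGeodesic σ (vertexAt a g ρ) (vertexAt a h ρ)) (hσlen : σ.length ≤ 2 * δ) :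
    X.AngleBounded (8 * δ : ℕ) σ := by
  refine angleBounded_of_forall_getElem σ fun i hi => ?_
  have hc : ∀ m ≤ σ.length, vertexAt _ σ m = vertexAt _ σ (i + 1) → m = i + 1 :=
    fun m hm heq => hσ.eq_of_vertexAt_eq hm hi.le heq
  obtain ⟨P, hP, hPlen, hPv⟩ := hσ.1.exists_subwalk (i := i) (k := 0) (by omega) (by omega)
  obtain ⟨Q, hQ, hQlen, hQv⟩ := hσ.1.exists_subwalk (i := σ.length) (k := i + 2) le_rfl hi
  rw [vertexAt_zero] at hP
  rw [hσ.1.vertexAt_length] at hQ hQv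
  rw [angle, hσ.1.o_getElem, hσ.1.t_getElem, hσ.1.t_getElem]
  refine (hδ.delDist_le hg hh hρ hP ?_ hQ ?_ ?_ ?_).trans (Nat.cast_le.2 (by omega))
  · intro hmem
    obtain ⟨m, -, hm, heq⟩ := hPv _ hmem
    have := hc m (by omega) heq.symm
    omega
  · intro hmem
    obtain ⟨m, hm, hm', heq⟩ := hQv _ hmem
    have := hc m (by omega) heq.symm
    omega
  · intro heq
    have := hc 0 (Nat.zero_le _) (by rw [vertexAt_zero]; exact heq.symm)
    omega
  · intro heq
    have := hc σ.length le_rfl (by rw [hσ.1.vertexAt_length]; exact heq.symm)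
    omega

lemma Hyperbolic.angle_rev_le (hδ : X.Hyperbolic δ) (hg : X.IsGeodesic g a x)
    (hh : X.IsGeodesic h a x) {ρ i : ℕ} (hρ : ρ ≤ g.length) (hi : i ≤ g.length)
    (hiρ : i + 1 = ρ ∨ i = ρ + 1) {e f : X.E} {σ : List X.E} (heo : X.o e = vertexAt a g ρ)
    (het : X.t e = vertexAt a g i) (hσ : X.IsGeodesic (f :: σ) (X.o e) (vertexAt a h ρ))
    (hσlen : σ.length < 2 * δ) :
    X.angle (X.rev e) f ≤ (8 * δ + 1 : ℕ) := by
  have hc : ∀ m ≤ (f :: σ).length, vertexAt (X.o e) (f :: σ) m = X.o e → m = 0 :=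
    fun m hm heq => hσ.eq_of_vertexAt_eq hm (Nat.zero_le _) (by rw [heq, vertexAt_zero])
  have hch : X.o e ≠ vertexAt a h ρ := fun heq => by
    have := hc _ le_rfl (by rw [hσ.1.vertexAt_length, heq])
    simp at this
  obtain ⟨hρ₁, hρ₂⟩ := hg.one_le_of_vertexAt_ne hh hρ (heo ▸ hch)
  have hcg : X.o e ≠ vertexAt a g i := fun heq => by
    have := hg.eq_of_vertexAt_eq hρ hi (heo ▸ heq)
    omega
  obtain ⟨L, hL, hLlen, hLc⟩ : ∃ L, X.IsWalk L (vertexAt a g i) (vertexAt a h ρ) ∧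
      L.length ≤ 6 * δ + 2 ∧ X.o e ∉ X.walkVerts (vertexAt a g i) L := by
    rcases hiρ with hiρ | hiρ
    · exact hδ.exists_walk_below hg hh hρ₁ hρ (by omega) (by omega)
        (heo ▸ (hg.dist_start_vertexAt hρ).ge) hcg hch
    · exact hδ.exists_walk_above hg hh hρ₂ (by omega) (by omega)
        (heo ▸ (hg.dist_start_vertexAt hρ).le) hcg hch
  obtain ⟨Q, hQ, hQlen, hQv⟩ :=
    hσ.1.exists_subwalk (i := (f :: σ).length) (k := 1) le_rfl (by simp)
  rw [hσ.1.vertexAt_length] at hQ hQv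
  have htf : vertexAt (X.o e) (f :: σ) 1 = X.t f :=
    (vertexAt_cons _ _ _ (Nat.zero_le _)).trans (vertexAt_zero _ _)
  rw [angle, X.rev_t, X.rev_o, het, ← htf]
  refine (delDist_le_length (hL.append hQ) ?_).trans (Nat.cast_le.2 (by simp at hQlen ⊢; omega))
  rw [hL.mem_walkVerts_append]
  rintro (hmem | hmem)
  · exact hLc hmem
  · obtain ⟨m, hm, hm', heq⟩ := hQv _ hmem
    have := hc m (by simpa using hm') heq.symm
    simp only [List.length_cons] at hm
    omega

lemma Hyperbolic.inConeV (hδpos : 0 < δ) (hδ : X.Hyperbolic δ) (hg : X.IsGeodesic g a x)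
    (hh : X.IsGeodesic h a x) {ρ i : ℕ} (hρ : ρ ≤ g.length) (hi : i ≤ g.length)
    (hiρ : i + 1 = ρ ∨ i = ρ + 1) {e : X.E} (heo : X.o e = vertexAt a g ρ)
    (het : X.t e = vertexAt a g i) :
    X.InConeV (10 * δ : ℕ) e (vertexAt a h ρ) := by
  obtain ⟨σ, hσ, hσlen⟩ := exists_isGeodesic_of_dist_le (hδ.dist_vertexAt_le hg hh hρ)
  have hne : X.t e ≠ X.o e := by
    rw [heo, het]
    intro heq
    have := hg.eq_of_vertexAt_eq hi hρ heq
    omega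
  rw [← heo] at hσ
  have hwalk : X.IsWalk (e :: X.rev e :: σ) (X.o e) (vertexAt a h ρ) :=
    ⟨rfl, X.rev_o e, by rw [X.rev_t]; exact hσ.1⟩
  refine ⟨X.rev e :: σ, _, hwalk, Nat.cast_le.2 (by simp; omega), ⟨?_, ?_⟩,
    hwalk.end_mem_walkVerts⟩
  · rw [angle, X.rev_t]
    exact (delDist_le_length (es := []) rfl (by simpa using hne)).trans (by simp)
  · cases σ with
    | nil => trivial
    | cons f σ =>
      refine ⟨(hδ.angle_rev_le hg hh hρ hi hiρ heo het hσ (by simp at hσlen; omega)).trans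
        (Nat.cast_le.2 (by omega)), ?_⟩
      exact (hδ.angleBounded_of_isGeodesic hg hh hρ (heo ▸ hσ) hσlen).mono
        (Nat.cast_le.2 (by omega))

lemma Hyperbolic.vertexAt_mem_conicalSet (hδpos : 0 < δ) (hδ : X.Hyperbolic δ)
    (hh : X.IsGeodesic h a x) {ρ : ℕ} (hρ : ρ ≤ h.length) :
    vertexAt a h ρ ∈ X.ConicalSet (2 * δ) a x := by
  obtain ⟨hda, hdx⟩ := hh.dist_vertexAt hρ
  refine ⟨?_, ?_, ?_⟩
  · rw [OnAlphaGeod, dist_comm x, dist_comm _ a, dist_comm x, ← hh.2, hda, hdx]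
    norm_cast
    omega
  · rw [hda, ← hh.2]
    exact Nat.cast_le.2 hρ
  · rintro e ⟨hlevel, es, hes, he⟩
    obtain ⟨g, k, hg, hk, hedge⟩ := exists_vertexAt_of_mem_isGeodesic hes he
    rw [hda] at hlevel
    refine (?_ : X.InConeV (10 * δ : ℕ) e _).mono (Nat.cast_le.2 (by omega))
    rcases hedge with ⟨ho, ht⟩ | ⟨ho, ht⟩
    · obtain rfl : k = ρ := by
        rw [ho, hg.dist_start_vertexAt hk.le] at hlevel
        exact_mod_cast hlevel
      exact hδ.inConeV hδpos hg hh hk.le hk (.inr rfl) ho ht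
    · obtain rfl : k + 1 = ρ := by
        rw [ho, hg.dist_start_vertexAt hk] at hlevel
        exact_mod_cast hlevel
      exact hδ.inConeV hδpos hg hh hk hk.le (.inl rfl) ho ht

end Geodesics

end MGraph

/-- every vertex on a geodesic between `a` and `x` belongs to
`U_{2δ}[a,x]`; in particular each slice at distance `ρ ≤ d(a,x)` from `a` is
non-empty. -/
theorem stmt_9 (X : MGraph) (δ : ℕ) (hδpos : 0 < δ) (hδ : X.Hyperbolic δ)
    (a x : X.V) (hconn : X.dist a x ≠ ⊤) :
    (∀ (es : List X.E) (v : X.V),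
        ((X.IsGeodesic es a x ∧ v ∈ X.walkVerts a es) ∨
         (X.IsGeodesic es x a ∧ v ∈ X.walkVerts x es)) →
        v ∈ X.ConicalSet (2 * δ) a x) ∧
    (∀ ρ : ℕ, (ρ : ℕ∞) ≤ X.dist a x →
        ∃ t ∈ X.ConicalSet (2 * δ) a x, X.dist a t = (ρ : ℕ∞)) := by
  have hmem : ∀ es v, X.IsGeodesic es a x → v ∈ X.walkVerts a es →
      v ∈ X.ConicalSet (2 * δ) a x := by
    intro es v hes hv
    obtain ⟨ρ, hρ, rfl⟩ := MGraph.mem_walkVerts_iff.1 hv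
    exact hδ.vertexAt_mem_conicalSet hδpos hes hρ
  refine ⟨fun es v hv => ?_, fun ρ hρ => ?_⟩
  · rcases hv with ⟨hes, hv⟩ | ⟨hes, hv⟩
    · exact hmem es v hes hv
    · exact hmem _ v hes.rev (hes.1.mem_walkVerts_revWalk.2 hv)
  · obtain ⟨g, hg⟩ := MGraph.exists_isGeodesic hconn
    have hρg : ρ ≤ g.length := by exact_mod_cast hg.2 ▸ hρ
    exact ⟨_, hmem g _ hg (MGraph.vertexAt_mem_walkVerts hρg), hg.dist_start_vertexAt hρg⟩
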